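/- Achievability by domination: Let K ≥ 2 be a natural number, M > 0 a real number, and let d : Fin K → ℝ satisfy d_i ≥ 0 for all i and d_i + d_j ≤ M for all i ≠ j. Suppose further that d₀ ≥ d₁ ≥ d_k for all k ≥ 2 (i.e., the first two coordinates are the two largest). Then the point whose first coordinate is d₀ and whose remaining K − 1 coordinates all equal d₁ lies in the convex hull of the three points (M, 0, …, 0), (M/2, M/2, …, M/2), and (0, 0, …, 0) in ℝ^K, and it dominates d componentwise: d_k ≤ d₁ for every k ≥ 2, so d is componentwise at most this convex-hull point. -/

import Mathlib

/-!
With `s = (d₀ - d₁) / M` and `t = 2 d₁ / M` the point `(d₀, d₁, …, d₁)` equals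
`s • (M, 0, …, 0) + t • (M/2, …, M/2)`, and `s + t = (d₀ + d₁) / M ≤ 1`, so the remaining weight
`1 - s - t` can be put on the zero point. Domination is immediate from the ordering of the
coordinates.
-/

theorem smul_add_smul_mem_convexHull_insert_zero {𝕜 E : Type*} [Field 𝕜] [LinearOrder 𝕜]
    [IsStrictOrderedRing 𝕜] [AddCommGroup E] [Module 𝕜 E] {x y : E} {s t : 𝕜}
    (hs : 0 ≤ s) (ht : 0 ≤ t) (hst : s + t ≤ 1) :
    s • x + t • y ∈ convexHull 𝕜 {x, y, 0} := by
  have h := (convex_convexHull 𝕜 {x, y, (0 : E)}).sum_mem (t := Finset.univ)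
    (w := ![s, t, 1 - s - t]) (z := ![x, y, 0])
    (fun i _ => by fin_cases i <;> simp <;> linarith)
    (by simp [Fin.sum_univ_three])
    (fun i _ => subset_convexHull 𝕜 _ (by fin_cases i <;> simp))
  simpa [Fin.sum_univ_three] using h

theorem ite_mem_convexHull_single_const_zero {ι : Type*} [DecidableEq ι] (i₀ : ι) {M a b : ℝ}
    (hM : 0 < M) (hb : 0 ≤ b) (hba : b ≤ a) (hab : a + b ≤ M) :
    (fun i => if i = i₀ then a else b) ∈
      convexHull ℝ {fun i => if i = i₀ then M else 0, fun _ => M / 2, 0} := by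
  have hpoint : (fun i => if i = i₀ then a else b) =
      ((a - b) / M) • (fun i => if i = i₀ then M else 0) + (2 * b / M) • fun _ : ι => M / 2 := by
    funext i
    by_cases hi : i = i₀
    · simp only [hi, if_true, Pi.add_apply, Pi.smul_apply, smul_eq_mul]
      field_simp
      ring
    · simp only [hi, if_false, Pi.add_apply, Pi.smul_apply, smul_eq_mul, mul_zero, zero_add]
      field_simp
  rw [hpoint]
  refine smul_add_smul_mem_convexHull_insert_zero (by positivity) (by positivity) ?_
  rw [← add_div, div_le_one hM]
  linarith

/-- Achievability by domination. If d is in the region and its two largest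
coordinates are d₀ ≥ d₁ (positions 0 and 1), then the point (d₀, d₁, …, d₁) lies in the
convex hull of {(M,0,…,0), (M/2,…,M/2), 0} and dominates d componentwise. -/
theorem achievability_by_domination (K : ℕ) (hK : 2 ≤ K) (M : ℝ) (hM : 0 < M)
    (d : Fin K → ℝ) (hpos : ∀ i, 0 ≤ d i)
    (hpair : ∀ i j, i ≠ j → d i + d j ≤ M)
    (h01 : d ⟨1, by omega⟩ ≤ d ⟨0, by omega⟩)
    (hrest : ∀ k : Fin K, 2 ≤ (k : ℕ) → d k ≤ d ⟨1, by omega⟩) :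
    (fun i : Fin K => if i = (⟨0, by omega⟩ : Fin K) then d ⟨0, by omega⟩ else d ⟨1, by omega⟩) ∈
      convexHull ℝ {(fun i : Fin K => if i = (⟨0, by omega⟩ : Fin K) then M else 0),
        (fun _ : Fin K => M / 2), (0 : Fin K → ℝ)} ∧
    ∀ k : Fin K, d k ≤
      (fun i : Fin K => if i = (⟨0, by omega⟩ : Fin K) then d ⟨0, by omega⟩ else d ⟨1, by omega⟩) k := by
  refine ⟨ite_mem_convexHull_single_const_zero _ hM (hpos _) h01
    (hpair _ _ (by simp [Fin.ext_iff])), fun k => ?_⟩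
  dsimp only
  split_ifs with hk0
  · rw [hk0]
  · rcases lt_or_ge (k : ℕ) 2 with hk | hk
    · rw [show k = ⟨1, by omega⟩ from Fin.ext (by simp [Fin.ext_iff] at hk0 ⊢; omega)]
    · exact hrest k hk
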